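/- arXiv:2301.11820 — 3 statements merged into one kernel-verified Lean document; each statement's English description precedes it below -/
import Mathlib

section
/- Let A be a finite alphabet and P = {(n_j, I_j)}_{j∈ℕ} a countable set of pairs with n_j ∈ ℤ and I_j a finite word over A of length m_j, such that every sequence s ∈ A^ℤ coincides with at most one pair of P (where s coincides with (n_j,I_j) means s_{n_j}...s_{n_j+m_j−1} = I_j). If P is infinite, then S_P ≠ A^ℤ, where S_P is the set of sequences coinciding with some pair of P. -/
/-- `s` coincides with the pair `p = (n, I)` if the symbols of `s` at positions
`n, ..., n + |I| - 1` form the word `I`. -/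
def Coincides {A : Type*} (s : ℤ → A) (p : ℤ × List A) : Prop :=
  ∀ (i : ℕ) (hi : i < p.2.length), s (p.1 + i) = p.2.get ⟨i, hi⟩

/-- The set of sequences coinciding with some pair of `P`. -/
def SP {A : Type*} (P : Set (ℤ × List A)) : Set (ℤ → A) :=
  {s | ∃ p ∈ P, Coincides s p}

/-- Every sequence coincides with at most one pair of `P`
(the defining condition of a countable generalized shift). -/
def AtMostOne {A : Type*} (P : Set (ℤ × List A)) : Prop :=
  ∀ s : ℤ → A, ∀ p ∈ P, ∀ q ∈ P, Coincides s p → Coincides s q → p = q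

/-- Replace the symbols of `s` at positions `n, ..., n + |w| - 1` by the word `w`. -/
noncomputable def replaceWord {A : Type*} (s : ℤ → A) (n : ℤ) (w : List A) : ℤ → A :=
  fun k => if h : 0 ≤ k - n ∧ (k - n).toNat < w.length
    then w.get ⟨(k - n).toNat, h.2⟩ else s k

open scoped Classical in
/-- The countable generalized shift determined by the data `(P, J, H)`: if `s`
coincides with a (necessarily unique, when `AtMostOne P` holds) pair `p ∈ P`, replace
the word of `p` in `s` by `J p` and shift by `H p` (position `k` of the image is
position `k + H p` of the replaced sequence); otherwise leave `s` unchanged. -/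
noncomputable def cgsApply {A : Type*} (P : Set (ℤ × List A)) (J : ℤ × List A → List A)
    (H : ℤ × List A → ℤ) (s : ℤ → A) : ℤ → A :=
  if h : ∃ p ∈ P, Coincides s p then
    fun k => replaceWord s h.choose.1 (J h.choose) (k + H h.choose)
  else s

/-! Distinct pairs of `P` have disjoint cylinders, and cylinders are nonempty and open in the
compact space `A^ℤ`. A cover of a compact space by pairwise disjoint nonempty open sets is
finite, because a finite subcover must already contain every member. -/

theorem Set.Finite.of_pairwiseDisjoint_isOpen_cover {X ι : Type*} [TopologicalSpace X]
    [CompactSpace X] {s : Set ι} {U : ι → Set X} (hopen : ∀ i ∈ s, IsOpen (U i))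
    (hne : ∀ i ∈ s, (U i).Nonempty) (hdisj : s.PairwiseDisjoint U)
    (hcover : ⋃ i ∈ s, U i = Set.univ) : s.Finite := by
  obtain ⟨t, hts, htfin, htcover⟩ :=
    isCompact_univ.elim_finite_subcover_image hopen hcover.ge
  refine htfin.subset fun i hi => ?_
  obtain ⟨x, hx⟩ := hne i hi
  obtain ⟨j, hjt, hxj⟩ := Set.mem_iUnion₂.1 (htcover (Set.mem_univ x))
  rwa [hdisj.elim hi (hts hjt) (Set.not_disjoint_iff.2 ⟨x, hx, hxj⟩)]

theorem setOf_coincides_eq_iInter {A : Type*} (p : ℤ × List A) :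
    {s : ℤ → A | Coincides s p} = ⋂ i : Fin p.2.length, {s | s (p.1 + i) = p.2.get i} := by
  ext s
  simp only [Set.mem_ofPred_eq, Set.mem_iInter, Coincides, Fin.forall_iff]

theorem isOpen_setOf_coincides {A : Type*} [TopologicalSpace A] [DiscreteTopology A]
    (p : ℤ × List A) : IsOpen {s : ℤ → A | Coincides s p} := by
  rw [setOf_coincides_eq_iInter]
  exact isOpen_iInter_of_finite fun i =>
    (isOpen_discrete {p.2.get i}).preimage
      (continuous_apply _ : Continuous fun s : ℤ → A => s (p.1 + i))

theorem coincides_replaceWord {A : Type*} (s : ℤ → A) (n : ℤ) (w : List A) :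
    Coincides (replaceWord s n w) (n, w) := by
  intro i hi
  have hidx : (n + i - n).toNat = i := by omega
  simp only [replaceWord, hidx]
  rw [dif_pos ⟨by omega, hi⟩]

theorem AtMostOne.pairwiseDisjoint {A : Type*} {P : Set (ℤ × List A)} (hone : AtMostOne P) :
    P.PairwiseDisjoint fun p => {s : ℤ → A | Coincides s p} := fun p hp q hq hpq =>
  Set.disjoint_left.2 fun s hsp hsq => hpq (hone s p hp q hq hsp hsq)

theorem SP_eq_biUnion {A : Type*} (P : Set (ℤ × List A)) :
    SP P = ⋃ p ∈ P, {s : ℤ → A | Coincides s p} := by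
  ext s
  simp only [SP, Set.mem_ofPred_eq, Set.mem_iUnion, exists_prop]

/-- Diagonal argument: if `P` is an infinite set of pairs over a finite alphabet,
such that every sequence coincides with at most one pair of `P`, then `S_P ≠ A^ℤ`. -/
theorem SP_ne_univ_of_infinite {A : Type*} [Fintype A] [Nonempty A]
    (P : Set (ℤ × List A)) (hone : AtMostOne P) (hinf : P.Infinite) :
    SP P ≠ Set.univ := by
  let : TopologicalSpace A := ⊥
  have : DiscreteTopology A := ⟨rfl⟩
  intro hSP
  refine hinf (Set.Finite.of_pairwiseDisjoint_isOpen_cover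
    (fun p _ => isOpen_setOf_coincides p)
    (fun p _ => ⟨_, coincides_replaceWord (fun _ => Classical.arbitrary A) p.1 p.2⟩)
    hone.pairwiseDisjoint ?_)
  rw [← SP_eq_biUnion, hSP]
end

section
/- Let φ be a countable generalized shift on {0,1}^ℤ (or more generally A^ℤ) defined by data (P, J, H). Suppose φ 'modifies at infinity': there exist pairs p_k = (n_{i_k}, I_{i_k}) ∈ P and positions r_{i_k} ∈ {n_{i_k},...,n_{i_k}+m_{i_k}−1} with |r_{i_k}| → ∞ such that the symbol of I_{i_k} at position r_{i_k} differs from the symbol of J(p_k) at position r_{i_k}. Then the restriction φ|_{S_P} is not induced by any generalized shift; i.e., there is no generalized shift ψ with ψ(s) = φ(s) for all s ∈ S_P. -/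
/-!
Suppose a generalized shift `(G, F)` with finite windows `DG`, `DF` agrees with `φ` on `S_P`.
For `s` coinciding with `p ∈ P`, comparing the two descriptions of the image outside `DG` gives
`s k = (s with I_p replaced by J p) (k + H p - F s)`. If `H p ≠ F s`, a marker placed in `s` far
to the right, outside `DG ∪ DF` and the word of `p`, is not seen by `F` or `G` but would have to
reappear at a different position; so `F s = H p`. Then the equation says that replacing `I_p` by
`J p` changes nothing outside `DG`, which fails for a pair modifying a symbol outside `DG`.
-/

open Filter

section ReplaceWord

variable {A : Type*}

lemma replaceWord_add (s : ℤ → A) (n : ℤ) (w : List A) (i : ℕ) (hi : i < w.length) :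
    replaceWord s n w (n + i) = w.get ⟨i, hi⟩ := by
  simp [replaceWord, hi]

lemma replaceWord_of_lt_or_le (s : ℤ → A) (n : ℤ) (w : List A) {k : ℤ}
    (hk : k < n ∨ n + w.length ≤ k) : replaceWord s n w k = s k :=
  dif_neg (by omega)

lemma coincides_replaceWord_s5 (s : ℤ → A) (p : ℤ × List A) :
    Coincides (replaceWord s p.1 p.2) p :=
  replaceWord_add s p.1 p.2

lemma Coincides.update {s : ℤ → A} {p : ℤ × List A} (hs : Coincides s p) {q : ℤ}
    (hq : p.1 + p.2.length ≤ q) (a : A) : Coincides (Function.update s q a) p := by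
  intro i hi
  rw [Function.update_of_ne (by omega)]
  exact hs i hi

end ReplaceWord

section InducedShift

variable {A : Type*} {P : Set (ℤ × List A)} {J : ℤ × List A → List A} {H : ℤ × List A → ℤ}

lemma cgsApply_of_coincides (hone : AtMostOne P) {s : ℤ → A} {p : ℤ × List A} (hp : p ∈ P)
    (hs : Coincides s p) :
    cgsApply P J H s = fun k => replaceWord s p.1 (J p) (k + H p) := by
  have hex : ∃ q ∈ P, Coincides s q := ⟨p, hp, hs⟩
  rw [cgsApply, dif_pos hex, hone s _ hex.choose_spec.1 p hp hex.choose_spec.2 hs]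

variable {DG DF : Finset ℤ} {G : (ℤ → A) → (ℤ → A)} {F : (ℤ → A) → ℤ}
  (hone : AtMostOne P) (hG : ∀ (s : ℤ → A) (k : ℤ), k ∉ DG → G s k = s k)
  (hGF : ∀ s ∈ SP P, (fun k => G s (k + F s)) = cgsApply P J H s)
include hone hG hGF

lemma eq_replaceWord_of_induces {s : ℤ → A} {p : ℤ × List A} (hp : p ∈ P)
    (hs : Coincides s p) {k : ℤ} (hk : k ∉ DG) :
    s k = replaceWord s p.1 (J p) (k + (H p - F s)) := by
  have h := congrFun (hGF s ⟨p, hp, hs⟩) (k - F s)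
  rw [cgsApply_of_coincides hone hp hs] at h
  simp only [sub_add_cancel] at h
  rw [← hG s k hk, h, sub_add_eq_add_sub, add_sub_assoc]

lemma shift_eq_of_induces [Nontrivial A] (hF : ∀ s t : ℤ → A, (∀ k ∈ DF, s k = t k) → F s = F t)
    (hJ : ∀ p ∈ P, (J p).length = p.2.length) {s : ℤ → A} {p : ℤ × List A} (hp : p ∈ P)
    (hs : Coincides s p) : F s = H p := by
  by_contra hne
  have hd : H p - F s ≠ 0 := sub_ne_zero.mpr (Ne.symm hne)
  have hfar : ∀ᶠ q in atTop, q ∉ DG ∧ q ∉ DF ∧ p.1 + p.2.length ≤ q ∧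
      p.1 + p.2.length ≤ q + (H p - F s) :=
    Eventually.and (atTop_le_cofinite DG.eventually_cofinite_notMem) <|
      Eventually.and (atTop_le_cofinite DF.eventually_cofinite_notMem) <|
      (eventually_ge_atTop _).and <|
      (tendsto_atTop_add_const_right _ _ tendsto_id).eventually_ge_atTop _
  obtain ⟨q, hqG, hqF, hq, hqd⟩ := hfar.exists
  obtain ⟨a, ha⟩ := exists_ne (s (q + (H p - F s)))
  have ht : Coincides (Function.update s q a) p := hs.update hq a
  have hFt : F (Function.update s q a) = F s :=
    hF _ s fun k hk => Function.update_of_ne (by rintro rfl; exact hqF hk) _ _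
  have key := eq_replaceWord_of_induces hone hG hGF hp ht hqG
  rw [hFt, replaceWord_of_lt_or_le _ _ _ (.inr (by rw [hJ p hp]; exact hqd)),
    Function.update_self, Function.update_of_ne (by omega)] at key
  exact ha key

end InducedShift

/-- If a countable generalized shift (with data `(P, J, H)`, at most one pair
coinciding with each sequence, and `J` length preserving) "modifies at infinity" —
there are pairs modifying a symbol at positions of arbitrarily large absolute
value — then its restriction to `S_P` is not induced by any generalized shift. -/
theorem modifies_at_infinity_not_generalizedShift {A : Type*}
    (z o : A) (hzo : z ≠ o)
    (P : Set (ℤ × List A)) (J : ℤ × List A → List A) (H : ℤ × List A → ℤ)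
    (hone : AtMostOne P)
    (hJlen : ∀ p ∈ P, (J p).length = p.2.length)
    (hmod : ∀ M : ℕ, ∃ p ∈ P, ∃ i : ℕ, ∃ hi : i < p.2.length,
      (M : ℤ) ≤ |p.1 + (i : ℤ)| ∧
      ∃ hi' : i < (J p).length, p.2.get ⟨i, hi⟩ ≠ (J p).get ⟨i, hi'⟩) :
    ¬ ∃ (DG DF : Finset ℤ) (G : (ℤ → A) → (ℤ → A)) (F : (ℤ → A) → ℤ),
      (∀ (s : ℤ → A) (k : ℤ), k ∉ DG → G s k = s k) ∧
      (∀ s t : ℤ → A, (∀ k ∈ DG, s k = t k) → ∀ k ∈ DG, G s k = G t k) ∧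
      (∀ s t : ℤ → A, (∀ k ∈ DF, s k = t k) → F s = F t) ∧
      (∀ s ∈ SP P, (fun k => G s (k + F s)) = cgsApply P J H s) := by
  rintro ⟨DG, DF, G, F, hG, -, hF, hGF⟩
  have := nontrivial_of_ne z o hzo
  obtain ⟨p, hp, i, hi, hfar, hi', hmodified⟩ := hmod (DG.sup Int.natAbs + 1)
  have hr : p.1 + i ∉ DG := fun hmem => by
    have := Finset.le_sup (f := Int.natAbs) hmem
    rw [Int.abs_eq_natAbs] at hfar
    omega
  set s := replaceWord (fun _ => z) p.1 p.2
  have hs : Coincides s p := coincides_replaceWord_s5 _ p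
  have key := eq_replaceWord_of_induces hone hG hGF hp hs hr
  rw [shift_eq_of_induces hone hG hGF hF hJlen hp hs, sub_self, add_zero, hs i hi,
    replaceWord_add _ _ _ i hi'] at key
  exact hmodified key
end

section
/- Let φ: A^ℤ → A^ℤ be a countable generalized shift defined by data (P, J, H) with alphabet A = {0,1}, and let e: {0,1}^ℤ → C² be the standard encoding into the square Cantor set. Then there exists a countable family of pairwise disjoint blocks {B_j^k} of C² and a map f: ⊔ B_j^k → [0,1]², piecewise affine and area-preserving on each block, such that for every s ∈ S_P, f(e(s)) = e(φ(s)). -/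
/-- The ternary Cantor set: reals admitting a base-3 expansion using only digits 0 and 2. -/
def cantorC : Set ℝ :=
  {x | ∃ f : ℕ → Bool, x = ∑' i : ℕ, (if f i then (2 : ℝ) else 0) / 3 ^ (i + 1)}

/-- The square Cantor set `C × C`. -/
def cantorC2 : Set (ℝ × ℝ) := cantorC ×ˢ cantorC

/-- The standard encoding of bi-infinite binary sequences into the square Cantor set:
the second coordinate encodes positions `0, 1, 2, ...` and the first coordinate
encodes positions `-1, -2, ...`. -/
noncomputable def cantorEnc (s : ℤ → Bool) : ℝ × ℝ :=
  (∑' i : ℕ, (if s (-(i : ℤ) - 1) then (2 : ℝ) else 0) / 3 ^ (i + 1),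
   ∑' i : ℕ, (if s (i : ℤ) then (2 : ℝ) else 0) / 3 ^ (i + 1))

/-- A Cantor block: `[a/3^i, (a+1)/3^i] × [b/3^j, (b+1)/3^j]` whose interior
contains a point of the square Cantor set. -/
def IsCantorBlock (B : Set (ℝ × ℝ)) : Prop :=
  ∃ i j a b : ℕ, a < 3 ^ i ∧ b < 3 ^ j ∧
    B = Set.Icc ((a : ℝ) / 3 ^ i) (((a : ℝ) + 1) / 3 ^ i) ×ˢ
        Set.Icc ((b : ℝ) / 3 ^ j) (((b : ℝ) + 1) / 3 ^ j) ∧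
    (cantorC2 ∩ interior B).Nonempty


namespace CGSaux



noncomputable def dig (b : Bool) : ℝ := if b then 2 else 0

lemma dig_nonneg (b : Bool) : 0 ≤ dig b := by cases b <;> norm_num [dig]
lemma dig_le_two (b : Bool) : dig b ≤ 2 := by cases b <;> norm_num [dig]

lemma term_nonneg (u : ℕ → Bool) (i : ℕ) : 0 ≤ dig (u i) / 3 ^ (i+1) :=
  div_nonneg (dig_nonneg _) (by positivity)

lemma summable_two : Summable (fun i : ℕ => (2:ℝ) / 3 ^ (i+1)) := by
  have h : (fun i : ℕ => (2:ℝ) / 3 ^ (i+1)) = fun i => (2/3) * (1/3:ℝ)^i := by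
    funext i
    rw [pow_succ]
    field_simp
    ring_nf
    rw [← mul_pow]; norm_num
  rw [h]
  exact (summable_geometric_of_lt_one (by norm_num) (by norm_num)).mul_left _

lemma tsum_two : ∑' i : ℕ, (2:ℝ) / 3 ^ (i+1) = 1 := by
  have h : (fun i : ℕ => (2:ℝ) / 3 ^ (i+1)) = fun i => (2/3) * (1/3:ℝ)^i := by
    funext i
    rw [pow_succ]
    field_simp
    ring_nf
    rw [← mul_pow]; norm_num
  rw [h, tsum_mul_left, tsum_geometric_of_lt_one (by norm_num) (by norm_num)]
  norm_num

lemma summable_dig (u : ℕ → Bool) : Summable (fun i => dig (u i) / 3 ^ (i+1)) := by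
  apply Summable.of_nonneg_of_le (term_nonneg u) (fun i => ?_) summable_two
  gcongr
  exact dig_le_two _

noncomputable def valSeq (u : ℕ → Bool) : ℝ := ∑' i, dig (u i) / 3 ^ (i+1)

noncomputable def headSum (K : ℕ) (u : ℕ → Bool) : ℝ :=
  ∑ i ∈ Finset.range K, dig (u i) / 3 ^ (i+1)

lemma valSeq_nonneg (u : ℕ → Bool) : 0 ≤ valSeq u :=
  tsum_nonneg (term_nonneg u)

lemma valSeq_le_one (u : ℕ → Bool) : valSeq u ≤ 1 := by
  rw [valSeq, ← tsum_two]
  refine Summable.tsum_le_tsum (fun i => ?_) (summable_dig u) summable_two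
  gcongr
  exact dig_le_two _

lemma valSeq_split (K : ℕ) (u : ℕ → Bool) :
    valSeq u = headSum K u + ((3:ℝ)^K)⁻¹ * valSeq (fun i => u (i + K)) := by
  have h := Summable.sum_add_tsum_nat_add (f := fun i => dig (u i) / 3 ^ (i+1)) K (summable_dig u)
  rw [valSeq, ← h, headSum]
  congr 1
  have e : (fun i => dig (u (i + K)) / 3 ^ (i + K + 1))
      = fun i => ((3:ℝ)^K)⁻¹ * (dig (u (i + K)) / 3 ^ (i+1)) := by
    funext i
    have h3 : ((3:ℝ)^K) ≠ 0 := by positivity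
    have h4 : ((3:ℝ)^(i+1)) ≠ 0 := by positivity
    rw [show i + K + 1 = K + (i+1) by ring, pow_add]
    field_simp
  show ∑' i, dig (u (i + K)) / 3 ^ (i + K + 1) = _
  rw [e, tsum_mul_left]
  rfl

lemma valSeq_true : valSeq (fun _ => true) = 1 := by
  rw [valSeq]
  have : ∀ i : ℕ, dig ((fun _ => true) i) / 3^(i+1) = (2:ℝ)/3^(i+1) := by
    intro i; norm_num [dig]
  simp only [this]
  exact tsum_two

lemma headSum_true (K : ℕ) : headSum K (fun _ => true) = 1 - ((3:ℝ)^K)⁻¹ := by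
  have h := valSeq_split K (fun _ => true)
  rw [valSeq_true] at h
  linarith



def natHead (u : ℕ → Bool) : ℕ → ℕ
  | 0 => 0
  | K+1 => 3 * natHead u K + (if u K then 2 else 0)

lemma natHead_lt (u : ℕ → Bool) (K : ℕ) : natHead u K < 3 ^ K := by
  induction K with
  | zero => simp [natHead]
  | succ K ih =>
    have : (if u K then 2 else 0) ≤ 2 := by split <;> omega
    have h3 : (3:ℕ)^(K+1) = 3 * 3^K := by ring
    simp only [natHead]
    omega

lemma natHead_cast (u : ℕ → Bool) (K : ℕ) :
    (natHead u K : ℝ) / 3 ^ K = headSum K u := by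
  induction K with
  | zero => simp [natHead, headSum]
  | succ K ih =>
    rw [headSum, Finset.sum_range_succ, ← headSum, ← ih]
    have h3' : ((3:ℝ)^K) ≠ 0 := by positivity
    simp only [natHead]
    cases hK : u K <;>
    · simp only [dig, hK, if_true, if_false, Bool.false_eq_true]
      push_cast
      rw [pow_succ]
      field_simp

lemma headSum_le (k K : ℕ) (hk : k ≤ K) (u : ℕ → Bool) :
    headSum K u - headSum k u ≤ ((3:ℝ)^k)⁻¹ - ((3:ℝ)^K)⁻¹ := by
  have h1 : headSum K u - headSum k u = ∑ i ∈ Finset.Ico k K, dig (u i) / 3^(i+1) := by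
    rw [headSum, headSum, Finset.range_eq_Ico, Finset.range_eq_Ico,
      ← Finset.sum_Ico_consecutive _ (Nat.zero_le k) hk]
    ring
  have h2 : headSum K (fun _ => true) - headSum k (fun _ => true)
      = ∑ i ∈ Finset.Ico k K, dig true / 3^(i+1) := by
    rw [headSum, headSum, Finset.range_eq_Ico, Finset.range_eq_Ico,
      ← Finset.sum_Ico_consecutive _ (Nat.zero_le k) hk]
    ring
  have h3 : ∑ i ∈ Finset.Ico k K, dig (u i) / 3^(i+1)
      ≤ ∑ i ∈ Finset.Ico k K, dig true / 3^(i+1) := by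
    refine Finset.sum_le_sum fun i _ => ?_
    exact div_le_div_of_nonneg_right (by cases u i <;> norm_num [dig]) (by positivity)
  rw [headSum_true, headSum_true] at h2
  rw [h1]
  calc _ ≤ ∑ i ∈ Finset.Ico k K, dig true / 3^(i+1) := h3
  _ = _ := by rw [← h2]; ring

lemma headSum_mono (k K : ℕ) (hk : k ≤ K) (u : ℕ → Bool) :
    headSum k u ≤ headSum K u := by
  rw [headSum, headSum, Finset.range_eq_Ico, Finset.range_eq_Ico,
    ← Finset.sum_Ico_consecutive _ (Nat.zero_le k) hk]
  have : 0 ≤ ∑ i ∈ Finset.Ico k K, dig (u i) / 3^(i+1) :=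
    Finset.sum_nonneg fun i _ => term_nonneg u i
  linarith

def cInt (K : ℕ) (u : ℕ → Bool) : Set ℝ :=
  Set.Icc (headSum K u) (headSum K u + ((3:ℝ)^K)⁻¹)

lemma cInt_subset (k K : ℕ) (hk : k ≤ K) (u : ℕ → Bool) : cInt K u ⊆ cInt k u := by
  apply Set.Icc_subset_Icc (headSum_mono k K hk u)
  have := headSum_le k K hk u
  linarith

lemma headSum_congr (K : ℕ) (u v : ℕ → Bool) (h : ∀ i < K, u i = v i) :
    headSum K u = headSum K v := by
  refine Finset.sum_congr rfl fun i hi => ?_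
  rw [h i (Finset.mem_range.mp hi)]

lemma cInt_disjoint_core (k K L : ℕ) (u v : ℕ → Bool) (hkK : k < K) (hkL : k < L)
    (hagree : ∀ i < k, u i = v i) (hu : u k = false) (hv : v k = true) :
    Disjoint (cInt K u) (cInt L v) := by
  have hsubu := cInt_subset (k+1) K hkK u
  have hsubv := cInt_subset (k+1) L hkL v
  refine Disjoint.mono hsubu hsubv ?_
  have h1 : headSum (k+1) u = headSum k u := by
    rw [headSum, Finset.sum_range_succ, hu]
    simp [dig, headSum]
  have h2 : headSum (k+1) v = headSum k v + 2 / 3^(k+1) := by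
    rw [headSum, Finset.sum_range_succ, hv]
    simp [dig, headSum]
  have h0 : headSum k u = headSum k v := headSum_congr k u v hagree
  have hpos : (0:ℝ) < ((3:ℝ)^(k+1))⁻¹ := by positivity
  have h2' : (2:ℝ) / 3^(k+1) = 2 * ((3:ℝ)^(k+1))⁻¹ := by ring
  refine Set.disjoint_left.mpr fun x hx hy => ?_
  have hxu : x ≤ headSum (k+1) u + ((3:ℝ)^(k+1))⁻¹ := hx.2
  have hyv : headSum (k+1) v ≤ x := hy.1
  linarith

lemma cInt_disjoint (K L : ℕ) (u v : ℕ → Bool)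
    (hne : ∃ k, k < K ∧ k < L ∧ u k ≠ v k) :
    Disjoint (cInt K u) (cInt L v) := by
  classical
  let k := Nat.find hne
  obtain ⟨hkK, hkL, hkne⟩ := Nat.find_spec hne
  have hagree : ∀ i < k, u i = v i := by
    intro i hi
    by_contra hcon
    exact absurd ⟨lt_trans hi hkK, lt_trans hi hkL, hcon⟩ (Nat.find_min hne hi)
  cases hu : u (Nat.find hne) with
  | false =>
    have hv : v (Nat.find hne) = true := by
      cases hvv : v (Nat.find hne)
      · rw [hu, hvv] at hkne; exact absurd rfl hkne
      · rfl
    exact cInt_disjoint_core _ K L u v hkK hkL hagree hu hv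
  | true =>
    have hv : v (Nat.find hne) = false := by
      cases hvv : v (Nat.find hne)
      · rfl
      · rw [hu, hvv] at hkne; exact absurd rfl hkne
    exact (cInt_disjoint_core _ L K v u hkL hkK (fun i hi => (hagree i hi).symm) hv hu).symm

-- window sizes
def Ml (H : ℤ × List Bool → ℤ) (p : ℤ × List Bool) : ℕ := (max (-p.1) (-H p)).toNat
def Nl (H : ℤ × List Bool → ℤ) (p : ℤ × List Bool) : ℕ := (max (p.1 + p.2.length) (H p)).toNat
def Ml' (H : ℤ × List Bool → ℤ) (p : ℤ × List Bool) : ℕ := ((Ml H p : ℤ) + H p).toNat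
def Nl' (H : ℤ × List Bool → ℤ) (p : ℤ × List Bool) : ℕ := ((Nl H p : ℤ) - H p).toNat

lemma Ml_ge_n (H : ℤ × List Bool → ℤ) (p : ℤ × List Bool) : -(Ml H p : ℤ) ≤ p.1 := by
  have h1 : -p.1 ≤ max (-p.1) (-H p) := le_max_left _ _
  have h2 : (max (-p.1) (-H p) : ℤ) ≤ ((max (-p.1) (-H p)).toNat : ℤ) := Int.self_le_toNat _
  rw [Ml]; omega

lemma Ml_ge_h (H : ℤ × List Bool → ℤ) (p : ℤ × List Bool) : -(Ml H p : ℤ) ≤ H p := by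
  have h1 : -H p ≤ max (-p.1) (-H p) := le_max_right _ _
  have h2 : (max (-p.1) (-H p) : ℤ) ≤ ((max (-p.1) (-H p)).toNat : ℤ) := Int.self_le_toNat _
  rw [Ml]; omega

lemma Nl_ge_n (H : ℤ × List Bool → ℤ) (p : ℤ × List Bool) :
    p.1 + p.2.length ≤ (Nl H p : ℤ) := by
  have h1 : p.1 + p.2.length ≤ max (p.1 + p.2.length) (H p) := le_max_left _ _
  have h2 : (max (p.1 + p.2.length) (H p) : ℤ) ≤ ((max (p.1 + p.2.length) (H p)).toNat : ℤ) :=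
    Int.self_le_toNat _
  rw [Nl]; omega

lemma Nl_ge_h (H : ℤ × List Bool → ℤ) (p : ℤ × List Bool) : H p ≤ (Nl H p : ℤ) := by
  have h1 : H p ≤ max (p.1 + p.2.length) (H p) := le_max_right _ _
  have h2 : (max (p.1 + p.2.length) (H p) : ℤ) ≤ ((max (p.1 + p.2.length) (H p)).toNat : ℤ) :=
    Int.self_le_toNat _
  rw [Nl]; omega

lemma Ml'_def (H : ℤ × List Bool → ℤ) (p : ℤ × List Bool) :
    (Ml' H p : ℤ) = (Ml H p : ℤ) + H p := by
  have := Ml_ge_h H p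
  rw [Ml']
  omega

lemma Nl'_def (H : ℤ × List Bool → ℤ) (p : ℤ × List Bool) :
    (Nl' H p : ℤ) = (Nl H p : ℤ) - H p := by
  have := Nl_ge_h H p
  rw [Nl']
  omega

lemma MlNl (H : ℤ × List Bool → ℤ) (p : ℤ × List Bool) :
    Ml' H p + Nl' H p = Ml H p + Nl H p := by
  have h1 := Ml'_def H p
  have h2 := Nl'_def H p
  omega

-- replaceWord lemmas
lemma replaceWord_low {s : ℤ → Bool} {n : ℤ} {w : List Bool} {k : ℤ} (h : k < n) :
    replaceWord s n w k = s k := by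
  simp only [replaceWord]
  rw [dif_neg (by omega)]

lemma replaceWord_high {s : ℤ → Bool} {n : ℤ} {w : List Bool} {k : ℤ}
    (h : n + w.length ≤ k) : replaceWord s n w k = s k := by
  simp only [replaceWord]
  rw [dif_neg (by omega)]

lemma replaceWord_congr {s σ : ℤ → Bool} {n : ℤ} {w : List Bool} {k : ℤ} (h : s k = σ k) :
    replaceWord s n w k = replaceWord σ n w k := by
  simp only [replaceWord]
  by_cases hc : 0 ≤ k - n ∧ (k - n).toNat < w.length
  · rw [dif_pos hc, dif_pos hc]
  · rw [dif_neg hc, dif_neg hc, h]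

-- the block data
noncomputable def tmap (J : ℤ × List Bool → List Bool) (H : ℤ × List Bool → ℤ)
    (p : ℤ × List Bool) (s : ℤ → Bool) : ℤ → Bool :=
  fun k => replaceWord s p.1 (J p) (k + H p)

noncomputable def cX (H : ℤ × List Bool → ℤ) (p : ℤ × List Bool) (σ : ℤ → Bool) : ℝ :=
  headSum (Ml H p) (fun i => σ (-(i:ℤ) - 1))
noncomputable def cY (H : ℤ × List Bool → ℤ) (p : ℤ × List Bool) (σ : ℤ → Bool) : ℝ :=
  headSum (Nl H p) (fun i => σ (i:ℤ))
noncomputable def cX' (J : ℤ × List Bool → List Bool) (H : ℤ × List Bool → ℤ)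
    (p : ℤ × List Bool) (σ : ℤ → Bool) : ℝ :=
  headSum (Ml' H p) (fun i => tmap J H p σ (-(i:ℤ) - 1))
noncomputable def cY' (J : ℤ × List Bool → List Bool) (H : ℤ × List Bool → ℤ)
    (p : ℤ × List Bool) (σ : ℤ → Bool) : ℝ :=
  headSum (Nl' H p) (fun i => tmap J H p σ (i:ℤ))

noncomputable def Blk (H : ℤ × List Bool → ℤ) (p : ℤ × List Bool) (σ : ℤ → Bool) :
    Set (ℝ × ℝ) :=
  Set.Icc (cX H p σ) (cX H p σ + ((3:ℝ)^(Ml H p))⁻¹) ×ˢ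
  Set.Icc (cY H p σ) (cY H p σ + ((3:ℝ)^(Nl H p))⁻¹)

def ValidCfg (P : Set (ℤ × List Bool)) (H : ℤ × List Bool → ℤ)
    (v : (ℤ × List Bool) × (ℤ → Bool)) : Prop :=
  v.1 ∈ P ∧ Coincides v.2 v.1 ∧
    ∀ k : ℤ, (k < -(Ml H v.1 : ℤ) ∨ (Nl H v.1 : ℤ) ≤ k) → v.2 k = false

-- agreement lemmas
lemma tmap_congr (J : ℤ × List Bool → List Bool) (H : ℤ × List Bool → ℤ)
    (p : ℤ × List Bool) {s σ : ℤ → Bool}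
    (hag : ∀ k : ℤ, -(Ml H p : ℤ) ≤ k → k < (Nl H p : ℤ) → s k = σ k)
    (k : ℤ) (h1 : -(Ml' H p : ℤ) ≤ k) (h2 : k < (Nl' H p : ℤ)) :
    tmap J H p s k = tmap J H p σ k := by
  have e1 := Ml'_def H p
  have e2 := Nl'_def H p
  exact replaceWord_congr (hag (k + H p) (by omega) (by omega))

lemma tmap_tail_neg (J : ℤ × List Bool → List Bool) (H : ℤ × List Bool → ℤ)
    (p : ℤ × List Bool) (s : ℤ → Bool) (i : ℕ) :
    tmap J H p s (-((i:ℤ) + Ml' H p) - 1) = s (-((i:ℤ) + Ml H p) - 1) := by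
  have e1 := Ml'_def H p
  have e2 := Ml_ge_n H p
  simp only [tmap]
  rw [show -((i:ℤ) + Ml' H p) - 1 + H p = -((i:ℤ) + Ml H p) - 1 by omega]
  exact replaceWord_low (by omega)

lemma tmap_tail_pos (J : ℤ × List Bool → List Bool) (H : ℤ × List Bool → ℤ)
    (p : ℤ × List Bool) (hlen : (J p).length = p.2.length) (s : ℤ → Bool) (i : ℕ) :
    tmap J H p s ((i:ℤ) + Nl' H p) = s ((i:ℤ) + Nl H p) := by
  have e1 := Nl'_def H p
  have e2 := Nl_ge_n H p
  simp only [tmap]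
  rw [show (i:ℤ) + Nl' H p + H p = (i:ℤ) + Nl H p by omega]
  refine replaceWord_high ?_
  rw [hlen]
  omega

lemma valSeq_congr (u v : ℕ → Bool) (h : ∀ i, u i = v i) : valSeq u = valSeq v := by
  have : u = v := funext h
  rw [this]

lemma cantorEnc_eq (s : ℤ → Bool) :
    cantorEnc s = (valSeq (fun i => s (-(i:ℤ) - 1)), valSeq (fun i => s (i:ℤ))) := rfl

lemma enc_x (H : ℤ × List Bool → ℤ) (p : ℤ × List Bool) (σ s : ℤ → Bool)
    (hag : ∀ k : ℤ, -(Ml H p : ℤ) ≤ k → k < (Nl H p : ℤ) → s k = σ k) :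
    valSeq (fun i => s (-(i:ℤ) - 1)) =
      cX H p σ + ((3:ℝ)^(Ml H p))⁻¹ * valSeq (fun i => s (-((i:ℤ) + Ml H p) - 1)) := by
  rw [valSeq_split (Ml H p)]
  congr 1
  · rw [cX]
    apply headSum_congr
    intro i hi
    exact hag _ (by omega) (by omega)

lemma enc_y (H : ℤ × List Bool → ℤ) (p : ℤ × List Bool) (σ s : ℤ → Bool)
    (hag : ∀ k : ℤ, -(Ml H p : ℤ) ≤ k → k < (Nl H p : ℤ) → s k = σ k) :
    valSeq (fun i => s (i:ℤ)) =
      cY H p σ + ((3:ℝ)^(Nl H p))⁻¹ * valSeq (fun i => s ((i:ℤ) + Nl H p)) := by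
  rw [valSeq_split (Nl H p)]
  congr 1
  · rw [cY]
    apply headSum_congr
    intro i hi
    exact hag _ (by omega) (by omega)

lemma enc_x' (J : ℤ × List Bool → List Bool) (H : ℤ × List Bool → ℤ)
    (p : ℤ × List Bool) (σ s : ℤ → Bool)
    (hag : ∀ k : ℤ, -(Ml H p : ℤ) ≤ k → k < (Nl H p : ℤ) → s k = σ k) :
    valSeq (fun i => tmap J H p s (-(i:ℤ) - 1)) =
      cX' J H p σ + ((3:ℝ)^(Ml' H p))⁻¹ * valSeq (fun i => s (-((i:ℤ) + Ml H p) - 1)) := by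
  rw [valSeq_split (Ml' H p)]
  congr 1
  · rw [cX']
    apply headSum_congr
    intro i hi
    exact tmap_congr J H p hag _ (by omega) (by omega)
  · congr 1
    apply valSeq_congr
    intro i
    simp only [Nat.cast_add]
    exact tmap_tail_neg J H p s i

lemma enc_y' (J : ℤ × List Bool → List Bool) (H : ℤ × List Bool → ℤ)
    (p : ℤ × List Bool) (hlen : (J p).length = p.2.length) (σ s : ℤ → Bool)
    (hag : ∀ k : ℤ, -(Ml H p : ℤ) ≤ k → k < (Nl H p : ℤ) → s k = σ k) :
    valSeq (fun i => tmap J H p s (i:ℤ)) =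
      cY' J H p σ + ((3:ℝ)^(Nl' H p))⁻¹ * valSeq (fun i => s ((i:ℤ) + Nl H p)) := by
  rw [valSeq_split (Nl' H p)]
  congr 1
  · rw [cY']
    apply headSum_congr
    intro i hi
    exact tmap_congr J H p hag _ (by omega) (by omega)
  · congr 1
    apply valSeq_congr
    intro i
    simp only [Nat.cast_add]
    exact tmap_tail_pos J H p hlen s i

lemma mem_Blk (H : ℤ × List Bool → ℤ) (p : ℤ × List Bool) (σ s : ℤ → Bool)
    (hag : ∀ k : ℤ, -(Ml H p : ℤ) ≤ k → k < (Nl H p : ℤ) → s k = σ k) :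
    cantorEnc s ∈ Blk H p σ := by
  rw [cantorEnc_eq, Blk, Set.mem_prod]
  constructor
  · rw [Set.mem_Icc, enc_x H p σ s hag]
    have h1 := valSeq_nonneg (fun i => s (-((i:ℤ) + Ml H p) - 1))
    have h2 := valSeq_le_one (fun i => s (-((i:ℤ) + Ml H p) - 1))
    have h3 : (0:ℝ) < ((3:ℝ)^(Ml H p))⁻¹ := by positivity
    constructor <;> nlinarith
  · rw [Set.mem_Icc, enc_y H p σ s hag]
    have h1 := valSeq_nonneg (fun i => s ((i:ℤ) + Nl H p))
    have h2 := valSeq_le_one (fun i => s ((i:ℤ) + Nl H p))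
    have h3 : (0:ℝ) < ((3:ℝ)^(Nl H p))⁻¹ := by positivity
    constructor <;> nlinarith

noncomputable def fBlk (J : ℤ × List Bool → List Bool) (H : ℤ × List Bool → ℤ)
    (p : ℤ × List Bool) (σ : ℤ → Bool) : ℝ × ℝ → ℝ × ℝ := fun z =>
  (cX' J H p σ + ((3:ℝ)^(Ml H p) / (3:ℝ)^(Ml' H p)) * (z.1 - cX H p σ),
   cY' J H p σ + ((3:ℝ)^(Nl H p) / (3:ℝ)^(Nl' H p)) * (z.2 - cY H p σ))

lemma fBlk_enc (J : ℤ × List Bool → List Bool) (H : ℤ × List Bool → ℤ)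
    (p : ℤ × List Bool) (hlen : (J p).length = p.2.length) (σ s : ℤ → Bool)
    (hag : ∀ k : ℤ, -(Ml H p : ℤ) ≤ k → k < (Nl H p : ℤ) → s k = σ k) :
    fBlk J H p σ (cantorEnc s) = cantorEnc (tmap J H p s) := by
  rw [cantorEnc_eq s, cantorEnc_eq (tmap J H p s), fBlk]
  have hx := enc_x H p σ s hag
  have hy := enc_y H p σ s hag
  have hx' := enc_x' J H p σ s hag
  have hy' := enc_y' J H p hlen σ s hag
  simp only [Prod.mk.injEq]
  constructor
  · rw [hx, hx']
    have key : (3:ℝ)^(Ml H p) / (3:ℝ)^(Ml' H p) * ((3:ℝ)^(Ml H p))⁻¹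
        = ((3:ℝ)^(Ml' H p))⁻¹ := by
      have h1 : ((3:ℝ)^(Ml H p)) ≠ 0 := by positivity
      have h2 : ((3:ℝ)^(Ml' H p)) ≠ 0 := by positivity
      field_simp
    linear_combination valSeq (fun i => s (-((i:ℤ) + Ml H p) - 1)) * key
  · rw [hy, hy']
    have key : (3:ℝ)^(Nl H p) / (3:ℝ)^(Nl' H p) * ((3:ℝ)^(Nl H p))⁻¹
        = ((3:ℝ)^(Nl' H p))⁻¹ := by
      have h1 : ((3:ℝ)^(Nl H p)) ≠ 0 := by positivity
      have h2 : ((3:ℝ)^(Nl' H p)) ≠ 0 := by positivity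
      field_simp
    linear_combination valSeq (fun i => s ((i:ℤ) + Nl H p)) * key

-- sample tail pattern
def uPoint : ℕ → Bool := fun i => decide (i ≠ 0)

lemma valSeq_uPoint : valSeq uPoint = 1/3 := by
  rw [valSeq_split 1]
  have h0 : headSum 1 uPoint = 0 := by
    rw [headSum]
    simp [uPoint, dig]
  have h1 : valSeq (fun i => uPoint (i + 1)) = 1 := by
    rw [valSeq_congr (fun i => uPoint (i + 1)) (fun _ => true) (fun i => by simp [uPoint])]
    exact valSeq_true
  rw [h0, h1]
  norm_num

def sample (H : ℤ × List Bool → ℤ) (p : ℤ × List Bool) (σ : ℤ → Bool) : ℤ → Bool := fun k =>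
  if -(Ml H p : ℤ) ≤ k ∧ k < (Nl H p : ℤ) then σ k
  else if k = -(Ml H p : ℤ) - 1 ∨ k = (Nl H p : ℤ) then false else true

lemma sample_ag (H : ℤ × List Bool → ℤ) (p : ℤ × List Bool) (σ : ℤ → Bool) :
    ∀ k : ℤ, -(Ml H p : ℤ) ≤ k → k < (Nl H p : ℤ) → sample H p σ k = σ k := by
  intro k h1 h2
  rw [sample, if_pos ⟨h1, h2⟩]

lemma sample_tail_x (H : ℤ × List Bool → ℤ) (p : ℤ × List Bool) (σ : ℤ → Bool) :
    (fun i : ℕ => sample H p σ (-((i:ℤ) + Ml H p) - 1)) = uPoint := by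
  funext i
  rw [sample, if_neg (by omega)]
  by_cases h0 : i = 0
  · subst h0
    rw [if_pos (by omega)]
    simp [uPoint]
  · rw [if_neg (by omega)]
    simp [uPoint, h0]

lemma sample_tail_y (H : ℤ × List Bool → ℤ) (p : ℤ × List Bool) (σ : ℤ → Bool) :
    (fun i : ℕ => sample H p σ ((i:ℤ) + Nl H p)) = uPoint := by
  funext i
  rw [sample, if_neg (by omega)]
  by_cases h0 : i = 0
  · subst h0
    rw [if_pos (by omega)]
    simp [uPoint]
  · rw [if_neg (by omega)]
    simp [uPoint, h0]

lemma cantorEnc_mem_cantorC2 (s : ℤ → Bool) : cantorEnc s ∈ cantorC2 :=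
  ⟨⟨fun i => s (-(i:ℤ) - 1), rfl⟩, ⟨fun i => s (i:ℤ), rfl⟩⟩

lemma isCantorBlock_Blk (H : ℤ × List Bool → ℤ) (p : ℤ × List Bool) (σ : ℤ → Bool) :
    IsCantorBlock (Blk H p σ) := by
  refine ⟨Ml H p, Nl H p, natHead (fun i => σ (-(i:ℤ) - 1)) (Ml H p),
    natHead (fun i => σ (i:ℤ)) (Nl H p), natHead_lt _ _, natHead_lt _ _, ?_, ?_⟩
  · rw [Blk]
    have e1 : ((natHead (fun i => σ (-(i:ℤ) - 1)) (Ml H p) : ℝ)) / 3 ^ (Ml H p) = cX H p σ :=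
      natHead_cast _ _
    have e2 : ((natHead (fun i => σ (i:ℤ)) (Nl H p) : ℝ)) / 3 ^ (Nl H p) = cY H p σ :=
      natHead_cast _ _
    have e1' : ((natHead (fun i => σ (-(i:ℤ) - 1)) (Ml H p) : ℝ) + 1) / 3 ^ (Ml H p)
        = cX H p σ + ((3:ℝ) ^ (Ml H p))⁻¹ := by
      rw [← e1]; field_simp
    have e2' : ((natHead (fun i => σ (i:ℤ)) (Nl H p) : ℝ) + 1) / 3 ^ (Nl H p)
        = cY H p σ + ((3:ℝ) ^ (Nl H p))⁻¹ := by
      rw [← e2]; field_simp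
    rw [e1, e2, e1', e2']
  · refine ⟨cantorEnc (sample H p σ), cantorEnc_mem_cantorC2 _, ?_⟩
    rw [Blk, interior_prod_eq, interior_Icc, interior_Icc, cantorEnc_eq, Set.mem_prod]
    have hag := sample_ag H p σ
    have hx := enc_x H p σ (sample H p σ) hag
    have hy := enc_y H p σ (sample H p σ) hag
    rw [sample_tail_x, valSeq_uPoint] at hx
    rw [sample_tail_y, valSeq_uPoint] at hy
    have h3 : (0:ℝ) < ((3:ℝ) ^ (Ml H p))⁻¹ := by positivity
    have h4 : (0:ℝ) < ((3:ℝ) ^ (Nl H p))⁻¹ := by positivity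
    constructor
    · rw [Set.mem_Ioo]
      constructor <;> [rw [hx]; rw [hx]] <;> nlinarith
    · rw [Set.mem_Ioo]
      constructor <;> [rw [hy]; rw [hy]] <;> nlinarith

lemma coincides_of_ag (H : ℤ × List Bool → ℤ) (p : ℤ × List Bool) {σ s : ℤ → Bool}
    (hc : Coincides σ p)
    (hag : ∀ k : ℤ, -(Ml H p : ℤ) ≤ k → k < (Nl H p : ℤ) → s k = σ k) : Coincides s p := by
  intro i hi
  rw [← hc i hi]
  have h1 := Ml_ge_n H p
  have h2 := Nl_ge_n H p
  exact hag _ (by omega) (by omega)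

lemma Blk_disjoint (P : Set (ℤ × List Bool)) (H : ℤ × List Bool → ℤ)
    (hone : AtMostOne P) {v w : (ℤ × List Bool) × (ℤ → Bool)}
    (hv : ValidCfg P H v) (hw : ValidCfg P H w) (hne : v ≠ w) :
    Disjoint (Blk H v.1 v.2) (Blk H w.1 w.2) := by
  by_contra hcon
  rw [Set.not_disjoint_iff] at hcon
  obtain ⟨z, hz1, hz2⟩ := hcon
  have hz1x : z.1 ∈ cInt (Ml H v.1) (fun i => v.2 (-(i:ℤ) - 1)) := hz1.1
  have hz2x : z.1 ∈ cInt (Ml H w.1) (fun i => w.2 (-(i:ℤ) - 1)) := hz2.1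
  have hz1y : z.2 ∈ cInt (Nl H v.1) (fun i => v.2 (i:ℤ)) := hz1.2
  have hz2y : z.2 ∈ cInt (Nl H w.1) (fun i => w.2 (i:ℤ)) := hz2.2
  have hagx : ∀ k : ℕ, k < Ml H v.1 → k < Ml H w.1 →
      v.2 (-(k:ℤ) - 1) = w.2 (-(k:ℤ) - 1) := by
    intro k h1 h2
    by_contra hk
    exact Set.not_disjoint_iff.mpr ⟨z.1, hz1x, hz2x⟩
      (cInt_disjoint _ _ _ _ ⟨k, h1, h2, hk⟩)
  have hagy : ∀ k : ℕ, k < Nl H v.1 → k < Nl H w.1 →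
      v.2 (k:ℤ) = w.2 (k:ℤ) := by
    intro k h1 h2
    by_contra hk
    exact Set.not_disjoint_iff.mpr ⟨z.2, hz1y, hz2y⟩
      (cInt_disjoint _ _ _ _ ⟨k, h1, h2, hk⟩)
  set s : ℤ → Bool := fun k =>
    if -(Ml H v.1 : ℤ) ≤ k ∧ k < (Nl H v.1 : ℤ) then v.2 k else w.2 k with hs
  have hsv : ∀ k : ℤ, -(Ml H v.1 : ℤ) ≤ k → k < (Nl H v.1 : ℤ) → s k = v.2 k := by
    intro k h1 h2
    show (if -(Ml H v.1 : ℤ) ≤ k ∧ k < (Nl H v.1 : ℤ) then v.2 k else w.2 k) = v.2 k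
    exact if_pos ⟨h1, h2⟩
  have hvw : ∀ k : ℤ, -(Ml H v.1 : ℤ) ≤ k → k < (Nl H v.1 : ℤ) →
      -(Ml H w.1 : ℤ) ≤ k → k < (Nl H w.1 : ℤ) → v.2 k = w.2 k := by
    intro k hv1 hv2 hw1 hw2
    rcases le_or_gt 0 k with hk0 | hk0
    · have h := hagy k.toNat (by omega) (by omega)
      rwa [Int.toNat_of_nonneg hk0] at h
    · have h := hagx (-k - 1).toNat (by omega) (by omega)
      rwa [show -(((-k - 1).toNat : ℤ)) - 1 = k by omega] at h
  have hsw : ∀ k : ℤ, -(Ml H w.1 : ℤ) ≤ k → k < (Nl H w.1 : ℤ) → s k = w.2 k := by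
    intro k h1 h2
    show (if -(Ml H v.1 : ℤ) ≤ k ∧ k < (Nl H v.1 : ℤ) then v.2 k else w.2 k) = w.2 k
    by_cases hin : -(Ml H v.1 : ℤ) ≤ k ∧ k < (Nl H v.1 : ℤ)
    · rw [if_pos hin]
      exact hvw k hin.1 hin.2 h1 h2
    · rw [if_neg hin]
  have hcv : Coincides s v.1 := coincides_of_ag H v.1 hv.2.1 hsv
  have hcw : Coincides s w.1 := coincides_of_ag H w.1 hw.2.1 hsw
  have hpq : v.1 = w.1 := hone s v.1 hv.1 w.1 hw.1 hcv hcw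
  have hσ : v.2 = w.2 := by
    funext k
    by_cases hin : -(Ml H v.1 : ℤ) ≤ k ∧ k < (Nl H v.1 : ℤ)
    · refine hvw k hin.1 hin.2 ?_ ?_ <;> rw [← hpq] <;> omega
    · rw [hv.2.2 k (by omega), hw.2.2 k (by rw [← hpq]; omega)]
  exact hne (Prod.ext hpq hσ)

noncomputable def code (H : ℤ × List Bool → ℤ) (v : (ℤ × List Bool) × (ℤ → Bool)) : ℕ :=
  Encodable.encode (v.1,
    List.ofFn (fun i : Fin (Ml H v.1 + Nl H v.1) => v.2 ((i : ℤ) - Ml H v.1)))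

lemma code_inj (P : Set (ℤ × List Bool)) (H : ℤ × List Bool → ℤ)
    {v w : (ℤ × List Bool) × (ℤ → Bool)}
    (hv : ValidCfg P H v) (hw : ValidCfg P H w) (h : code H v = code H w) : v = w := by
  obtain ⟨p, σ⟩ := v
  obtain ⟨q, τ⟩ := w
  have hp := Encodable.encode_injective h
  have hpq : p = q := congrArg Prod.fst hp
  subst hpq
  have hl := congrArg Prod.snd hp
  simp only at hl
  have hf := List.ofFn_injective hl
  have hv3 : ∀ k : ℤ, (k < -(Ml H p : ℤ) ∨ (Nl H p : ℤ) ≤ k) → σ k = false := hv.2.2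
  have hw3 : ∀ k : ℤ, (k < -(Ml H p : ℤ) ∨ (Nl H p : ℤ) ≤ k) → τ k = false := hw.2.2
  have hστ : σ = τ := by
    funext k
    by_cases hin : -(Ml H p : ℤ) ≤ k ∧ k < (Nl H p : ℤ)
    · have hk1 : (k + Ml H p).toNat < Ml H p + Nl H p := by omega
      have := congrFun hf ⟨(k + Ml H p).toNat, hk1⟩
      simp only at this
      rwa [show (((k + Ml H p).toNat : ℤ)) - Ml H p = k by omega] at this
    · rw [hv3 k (by omega), hw3 k (by omega)]
  rw [hστ]

attribute [irreducible] code

noncomputable def Lmap (r1 r2 : ℝ) : (ℝ × ℝ) →ₗ[ℝ] (ℝ × ℝ) :=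
  LinearMap.prodMap (r1 • LinearMap.id) (r2 • LinearMap.id)

lemma Lmap_apply (r1 r2 : ℝ) (z : ℝ × ℝ) : Lmap r1 r2 z = (r1 * z.1, r2 * z.2) := by
  simp [Lmap]

lemma Lmap_det (r1 r2 : ℝ) : LinearMap.det (Lmap r1 r2) = r1 * r2 := by
  have hm : LinearMap.toMatrix (Module.Basis.finTwoProd ℝ) (Module.Basis.finTwoProd ℝ) (Lmap r1 r2)
      = !![r1, 0; 0, r2] := by
    ext i j
    fin_cases i <;> fin_cases j <;>
      simp [LinearMap.toMatrix_apply, Lmap, Module.Basis.finTwoProd_zero, Module.Basis.finTwoProd_one,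
        Module.Basis.coe_finTwoProd_repr]
  have h2 := LinearMap.det_toMatrix (Module.Basis.finTwoProd ℝ) (Lmap r1 r2)
  rw [← h2, hm, Matrix.det_fin_two_of]
  ring

open Classical in
noncomputable def fGlob (P : Set (ℤ × List Bool)) (J : ℤ × List Bool → List Bool)
    (H : ℤ × List Bool → ℤ) : ℝ × ℝ → ℝ × ℝ := fun z =>
  if h : ∃ v : (ℤ × List Bool) × (ℤ → Bool), ValidCfg P H v ∧ z ∈ Blk H v.1 v.2 then
    fBlk J H h.choose.1 h.choose.2 z
  else z

lemma fGlob_eq (P : Set (ℤ × List Bool)) (J : ℤ × List Bool → List Bool)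
    (H : ℤ × List Bool → ℤ) (hone : AtMostOne P) {v : (ℤ × List Bool) × (ℤ → Bool)}
    (hv : ValidCfg P H v) {z : ℝ × ℝ} (hz : z ∈ Blk H v.1 v.2) :
    fGlob P J H z = fBlk J H v.1 v.2 z := by
  have hex : ∃ v : (ℤ × List Bool) × (ℤ → Bool), ValidCfg P H v ∧ z ∈ Blk H v.1 v.2 :=
    ⟨v, hv, hz⟩
  rw [fGlob, dif_pos hex]
  obtain ⟨hv', hz'⟩ := hex.choose_spec
  by_cases he : hex.choose = v
  · rw [he]
  · exact absurd (Blk_disjoint P H hone hv' hv he) (Set.not_disjoint_iff.mpr ⟨z, hz', hz⟩)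

noncomputable def BFam (P : Set (ℤ × List Bool)) (H : ℤ × List Bool → ℤ) :
    ℕ → Set (ℝ × ℝ) := fun n =>
  ⋃ (v : (ℤ × List Bool) × (ℤ → Bool)) (_ : ValidCfg P H v ∧ code H v = n), Blk H v.1 v.2

lemma BFam_eq_of (P : Set (ℤ × List Bool)) (H : ℤ × List Bool → ℤ)
    {v : (ℤ × List Bool) × (ℤ → Bool)} {n : ℕ} (hv : ValidCfg P H v) (hn : code H v = n) :
    BFam P H n = Blk H v.1 v.2 := by
  ext z
  simp only [BFam, Set.mem_iUnion, exists_prop]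
  constructor
  · rintro ⟨w, ⟨hw, hwc⟩, hz⟩
    have he := code_inj P H hw hv (hwc.trans hn.symm)
    rwa [he] at hz
  · intro hz
    exact ⟨v, ⟨hv, hn⟩, hz⟩

lemma BFam_empty (P : Set (ℤ × List Bool)) (H : ℤ × List Bool → ℤ) {n : ℕ}
    (h : ¬ ∃ v : (ℤ × List Bool) × (ℤ → Bool), ValidCfg P H v ∧ code H v = n) :
    BFam P H n = ∅ := by
  apply Set.eq_empty_iff_forall_notMem.mpr
  intro z hz
  rw [BFam] at hz
  simp only [Set.mem_iUnion] at hz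
  obtain ⟨v, hv, _⟩ := hz
  exact h ⟨v, hv⟩

lemma BFam_disjoint (P : Set (ℤ × List Bool)) (H : ℤ × List Bool → ℤ)
    (hone : AtMostOne P) : Pairwise (Function.onFun Disjoint (BFam P H)) := by
  intro m n hmn
  refine Set.disjoint_left.mpr fun z hz1 hz2 => ?_
  simp only [BFam, Set.mem_iUnion] at hz1 hz2
  obtain ⟨v, ⟨hv, hvc⟩, hzv⟩ := hz1
  obtain ⟨w, ⟨hw, hwc⟩, hzw⟩ := hz2
  have hvw : v ≠ w := fun he => hmn (by rw [← hvc, ← hwc, he])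
  exact Set.disjoint_left.mp (Blk_disjoint P H hone hv hw hvw) hzv hzw

lemma cgsApply_eq (P : Set (ℤ × List Bool)) (J : ℤ × List Bool → List Bool)
    (H : ℤ × List Bool → ℤ) (hone : AtMostOne P) {p : ℤ × List Bool} {s : ℤ → Bool}
    (hp : p ∈ P) (hs : Coincides s p) :
    cgsApply P J H s = tmap J H p s := by
  have hex : ∃ q ∈ P, Coincides s q := ⟨p, hp, hs⟩
  rw [cgsApply, dif_pos hex]
  have hc := hex.choose_spec
  have he : hex.choose = p := hone s hex.choose hc.1 p hp hc.2 hs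
  rw [he]
  rfl

end CGSaux

/-- Any countable generalized shift on `{0,1}^ℤ` is realized, on encoded sequences
of `S_P`, by a map defined on a countable family of pairwise disjoint Cantor blocks
which is affine and area-preserving (affine with `|det| = 1`) on each block. -/
theorem cgs_realized_by_block_map
    (P : Set (ℤ × List Bool)) (J : ℤ × List Bool → List Bool)
    (H : ℤ × List Bool → ℤ)
    (hone : AtMostOne P)
    (hJlen : ∀ p ∈ P, (J p).length = p.2.length) :
    ∃ (B : ℕ → Set (ℝ × ℝ)) (f : ℝ × ℝ → ℝ × ℝ),
      (∀ i, B i = ∅ ∨ IsCantorBlock (B i)) ∧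
      Pairwise (Function.onFun Disjoint B) ∧
      (∀ i, ∃ (L : (ℝ × ℝ) →ₗ[ℝ] (ℝ × ℝ)) (v : ℝ × ℝ),
        |LinearMap.det L| = 1 ∧ ∀ x ∈ B i, f x = L x + v) ∧
      ∀ s ∈ SP P, cantorEnc s ∈ (⋃ i, B i) ∧
        f (cantorEnc s) = cantorEnc (cgsApply P J H s) := by
  classical
  refine ⟨CGSaux.BFam P H, CGSaux.fGlob P J H, ?_, CGSaux.BFam_disjoint P H hone, ?_, ?_⟩
  · intro n
    by_cases hex : ∃ v : (ℤ × List Bool) × (ℤ → Bool),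
        CGSaux.ValidCfg P H v ∧ CGSaux.code H v = n
    · obtain ⟨v, hv, hn⟩ := hex
      right
      rw [CGSaux.BFam_eq_of P H hv hn]
      exact CGSaux.isCantorBlock_Blk H v.1 v.2
    · left
      exact CGSaux.BFam_empty P H hex
  · intro n
    by_cases hex : ∃ v : (ℤ × List Bool) × (ℤ → Bool),
        CGSaux.ValidCfg P H v ∧ CGSaux.code H v = n
    · obtain ⟨v, hv, hn⟩ := hex
      set r1 : ℝ := (3:ℝ)^(CGSaux.Ml H v.1) / (3:ℝ)^(CGSaux.Ml' H v.1) with hr1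
      set r2 : ℝ := (3:ℝ)^(CGSaux.Nl H v.1) / (3:ℝ)^(CGSaux.Nl' H v.1) with hr2
      refine ⟨CGSaux.Lmap r1 r2,
        (CGSaux.cX' J H v.1 v.2 - r1 * CGSaux.cX H v.1 v.2,
         CGSaux.cY' J H v.1 v.2 - r2 * CGSaux.cY H v.1 v.2), ?_, ?_⟩
      · rw [CGSaux.Lmap_det]
        have key : (3:ℝ)^(CGSaux.Ml H v.1) * (3:ℝ)^(CGSaux.Nl H v.1)
            = (3:ℝ)^(CGSaux.Ml' H v.1) * (3:ℝ)^(CGSaux.Nl' H v.1) := by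
          rw [← pow_add, ← pow_add, CGSaux.MlNl H v.1]
        have h1 : ((3:ℝ)^(CGSaux.Ml' H v.1)) ≠ 0 := by positivity
        have h2 : ((3:ℝ)^(CGSaux.Nl' H v.1)) ≠ 0 := by positivity
        have : r1 * r2 = 1 := by
          rw [hr1, hr2, div_mul_div_comm, key, div_self (by positivity)]
        rw [this]
        exact abs_one
      · intro x hx
        rw [CGSaux.BFam_eq_of P H hv hn] at hx
        rw [CGSaux.fGlob_eq P J H hone hv hx]
        simp only [CGSaux.fBlk, CGSaux.Lmap_apply, Prod.mk_add_mk, Prod.mk.injEq]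
        constructor <;> ring
    · refine ⟨LinearMap.id, 0, by rw [LinearMap.det_id]; exact abs_one, fun x hx => ?_⟩
      rw [CGSaux.BFam_empty P H hex] at hx
      exact absurd hx (Set.notMem_empty x)
  · intro s hs
    obtain ⟨p, hp, hcoin⟩ := hs
    set σ : ℤ → Bool := fun k =>
      if -(CGSaux.Ml H p : ℤ) ≤ k ∧ k < (CGSaux.Nl H p : ℤ) then s k else false with hσ
    have hag : ∀ k : ℤ, -(CGSaux.Ml H p : ℤ) ≤ k → k < (CGSaux.Nl H p : ℤ) → s k = σ k := by
      intro k h1 h2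
      show s k = if -(CGSaux.Ml H p : ℤ) ≤ k ∧ k < (CGSaux.Nl H p : ℤ) then s k else false
      rw [if_pos ⟨h1, h2⟩]
    have hag' : ∀ k : ℤ, -(CGSaux.Ml H p : ℤ) ≤ k → k < (CGSaux.Nl H p : ℤ) → σ k = s k :=
      fun k h1 h2 => (hag k h1 h2).symm
    have hv : CGSaux.ValidCfg P H (p, σ) := by
      refine ⟨hp, CGSaux.coincides_of_ag H p hcoin hag', fun k hk => ?_⟩
      have hk' : k < -(CGSaux.Ml H p : ℤ) ∨ (CGSaux.Nl H p : ℤ) ≤ k := hk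
      show (if -(CGSaux.Ml H p : ℤ) ≤ k ∧ k < (CGSaux.Nl H p : ℤ) then s k else false) = false
      rw [if_neg (by omega)]
    have hmem : cantorEnc s ∈ CGSaux.Blk H p σ := CGSaux.mem_Blk H p σ s hag
    constructor
    · exact Set.mem_iUnion.mpr ⟨CGSaux.code H (p, σ),
        by rw [CGSaux.BFam_eq_of P H hv rfl]; exact hmem⟩
    · rw [CGSaux.fGlob_eq P J H hone hv hmem, CGSaux.cgsApply_eq P J H hone hp hcoin]
      exact CGSaux.fBlk_enc J H p (hJlen p hp) σ s hag
end
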